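/- Unique Path Property: if f : X → Y and g : Y → Z are partial leaf functions and the composite gf contains the edge ⟨l, l'⟩ (i.e. (gf)(l) = l'), then there is a unique directed path l l₀ … lₙ l' in the union of f and g (viewed as a directed graph on X + Y + Z) from l to l'. -/

import Mathlib

namespace SignedSets

/-- A signed set: a set together with a sign function (`true` = positive). -/
structure SignedSet where
  carrier : Type
  sign : carrier → Bool

/-- Admissibility for the domain side of a partial leaf function `X → Y`:
the element lies in `X⁺ + Y⁻`. -/
def domOK (X Y : SignedSet) : X.carrier ⊕ Y.carrier → Prop
  | .inl x => X.sign x = true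
  | .inr y => Y.sign y = false

/-- Admissibility for the codomain side of a partial leaf function `X → Y`:
the element lies in `X⁻ + Y⁺`. -/
def codOK (X Y : SignedSet) : X.carrier ⊕ Y.carrier → Prop
  | .inl x => X.sign x = false
  | .inr y => Y.sign y = true

/-- A partial leaf function `X → Y`, presented as a functional relation
from `X⁺ + Y⁻` to `X⁻ + Y⁺`. -/
structure PLF (X Y : SignedSet) where
  rel : X.carrier ⊕ Y.carrier → X.carrier ⊕ Y.carrier → Prop
  functional : ∀ ⦃a b c⦄, rel a b → rel a c → b = c
  dom_ok : ∀ ⦃a b⦄, rel a b → domOK X Y a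
  cod_ok : ∀ ⦃a b⦄, rel a b → codOK X Y b

variable {X Y Z : SignedSet}

/-- One directed edge of the union of `f : X → Y` and `g : Y → Z`, viewed as a
directed graph on `X + Y + Z`. -/
def step (f : PLF X Y) (g : PLF Y Z) :
    (X.carrier ⊕ Y.carrier ⊕ Z.carrier) → (X.carrier ⊕ Y.carrier ⊕ Z.carrier) → Prop :=
  fun a b =>
    (∃ a' b', f.rel a' b' ∧ a = Sum.map id Sum.inl a' ∧ b = Sum.map id Sum.inl b') ∨
    (∃ a' b', g.rel a' b' ∧ a = Sum.inr a' ∧ b = Sum.inr b')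

/-- Path composition: `(g f)(l) = l'` iff there is a finite directed path from `l` to
`l'` in the union of `f` and `g`. -/
def pcomp (f : PLF X Y) (g : PLF Y Z) :
    X.carrier ⊕ Z.carrier → X.carrier ⊕ Z.carrier → Prop :=
  fun a b => Relation.TransGen (step f g) (Sum.map id Sum.inr a) (Sum.map id Sum.inr b)

end SignedSets

/-! The union of `f` and `g` is deterministic: on `Y`, `f` is defined on `Y⁻` and `g` on
`Y⁺`, so their domains are disjoint. Moreover, a vertex of `X + Z` entered by an edge lies in
`X⁻ + Z⁺`, whereas edges leave only from `X⁺ + Z⁻`, so `l'` is a dead end. A path of a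
deterministic relation ending at a dead end is determined by its starting point. -/

namespace List

variable {α : Type*} {r : α → α → Prop}

theorem exists_isChain_cons_append_singleton_of_transGen {a b : α}
    (h : Relation.TransGen r a b) : ∃ l, IsChain r (a :: (l ++ [b])) := by
  induction h using Relation.TransGen.head_induction_on with
  | single hab => exact ⟨[], .cons_cons hab (.singleton b)⟩
  | head hac _ ih =>
    obtain ⟨l, hl⟩ := ih
    exact ⟨_ :: l, .cons_cons hac hl⟩

theorem eq_nil_of_isChain_cons_of_forall_not_rel {b : α} {l : List α}
    (hb : ∀ c, ¬ r b c) (h : IsChain r (b :: l)) : l = [] := by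
  cases l with
  | nil => rfl
  | cons c _ => exact absurd h.rel (hb c)

theorem eq_of_isChain_cons_append_singleton (hr : Relator.RightUnique r) {b : α}
    (hb : ∀ c, ¬ r b c) :
    ∀ {a : α} {l₁ l₂ : List α}, IsChain r (a :: (l₁ ++ [b])) →
      IsChain r (a :: (l₂ ++ [b])) → l₁ = l₂
  | _, [], [], _, _ => rfl
  | _, [], _ :: l, h₁, h₂ => by
    obtain rfl := hr h₁.rel h₂.rel
    simpa using eq_nil_of_isChain_cons_of_forall_not_rel hb h₂.of_cons
  | _, _ :: l, [], h₁, h₂ => by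
    obtain rfl := hr h₂.rel h₁.rel
    simpa using eq_nil_of_isChain_cons_of_forall_not_rel hb h₁.of_cons
  | _, _ :: l₁, _ :: l₂, h₁, h₂ => by
    obtain rfl := hr h₁.rel h₂.rel
    rw [eq_of_isChain_cons_append_singleton hr hb h₁.of_cons h₂.of_cons]

end List

namespace SignedSets

variable {X Y Z : SignedSet} {f : PLF X Y} {g : PLF Y Z}

theorem not_domOK_of_codOK {v : X.carrier ⊕ Z.carrier} (h : codOK X Z v) : ¬ domOK X Z v := by
  cases v <;> simp_all [codOK, domOK]

theorem step_rightUnique : Relator.RightUnique (step f g) := by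
  rintro a b c (⟨a₁, b₁, h₁, rfl, rfl⟩ | ⟨a₁, b₁, h₁, rfl, rfl⟩)
    (⟨a₂, b₂, h₂, ha, rfl⟩ | ⟨a₂, b₂, h₂, ha, rfl⟩)
  · obtain rfl : a₁ = a₂ :=
      (Sum.map_injective.2 ⟨Function.injective_id, Sum.inl_injective⟩) ha
    rw [f.functional h₁ h₂]
  · have := f.dom_ok h₁
    have := g.dom_ok h₂
    cases a₁ <;> cases a₂ <;> simp_all [domOK]
  · have := g.dom_ok h₁
    have := f.dom_ok h₂
    cases a₁ <;> cases a₂ <;> simp_all [domOK]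
  · obtain rfl := Sum.inr_injective ha
    rw [g.functional h₁ h₂]

theorem codOK_of_step_to_outer {c} {v : X.carrier ⊕ Z.carrier}
    (h : step f g c (Sum.map id Sum.inr v)) : codOK X Z v := by
  rcases h with ⟨_, b, h, -, hb⟩ | ⟨_, b, h, -, hb⟩
  · have := f.cod_ok h
    cases v <;> cases b <;> simp_all [codOK]
  · have := g.cod_ok h
    cases v <;> cases b <;> simp_all [codOK]

theorem domOK_of_step_from_outer {d} {v : X.carrier ⊕ Z.carrier}
    (h : step f g (Sum.map id Sum.inr v) d) : domOK X Z v := by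
  rcases h with ⟨a, _, h, ha, -⟩ | ⟨a, _, h, ha, -⟩
  · have := f.dom_ok h
    cases v <;> cases a <;> simp_all [domOK]
  · have := g.dom_ok h
    cases v <;> cases a <;> simp_all [domOK]

/-- **Unique Path Property.** If the path composite `g f` contains the
edge `⟨l, l'⟩`, then there is a unique directed path `l l₀ … lₙ l'` in the union of
`f` and `g` from `l` to `l'` (uniqueness of the list of intermediate vertices). -/
theorem statement2 :
    ∀ (X Y Z : SignedSet) (f : PLF X Y) (g : PLF Y Z)
      (l l' : X.carrier ⊕ Z.carrier), pcomp f g l l' →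
      ∃! ls : List (X.carrier ⊕ Y.carrier ⊕ Z.carrier),
        List.Chain (step f g) (Sum.map id Sum.inr l) (ls ++ [Sum.map id Sum.inr l']) := by
  intro X Y Z f g l l' h
  obtain ⟨ls, hls⟩ := List.exists_isChain_cons_append_singleton_of_transGen h
  obtain ⟨c, hc⟩ := Relation.TransGen.tail'_iff.1 h
  have dead_end : ∀ d, ¬ step f g (Sum.map id Sum.inr l') d := fun d hd =>
    not_domOK_of_codOK (codOK_of_step_to_outer hc.2) (domOK_of_step_from_outer hd)
  exact ⟨ls, hls, fun ls' hls' =>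
    List.eq_of_isChain_cons_append_singleton step_rightUnique dead_end hls' hls⟩

end SignedSets
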